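/- Let 1 ≤ p < ∞ and α > 0. The set PH^p_α of pluriharmonic functions f with ‖f‖_{p,α} < ∞ is closed in L^p_α: if (f_m) is a sequence of pluriharmonic functions with ‖f_m‖_{p,α} < ∞ and f is a measurable function with ‖f_m − f‖_{p,α} → 0, then f agrees almost everywhere with a pluriharmonic function. -/

import Mathlib

/-!
A pluriharmonic function has the mean value property on balls: average the one-variable mean value
property over the complex circles through the centre, using the rotation invariance of Lebesgue
measure. With Hölder's inequality this bounds its values on a ball by a constant times its weighted
`L^p` norm, so a sequence `f_m` of pluriharmonic functions converging in `L^p_α` is uniformly Cauchy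
on balls and converges locally uniformly to some `F`. Normalising `f = g + conj h` by `h 0 = 0`, the
holomorphic part `g` is recovered from `f` by a Cauchy integral along the complex lines through the
origin; hence the holomorphic and antiholomorphic parts of `f_m` also converge locally uniformly,
their limits are holomorphic by the Cauchy estimates for derivatives, and `F` is pluriharmonic.
Finally a subsequence of `f_m` converges to `g` almost everywhere, so `g = F` almost everywhere.
-/

open MeasureTheory Metric Complex Filter
open scoped ENNReal Real

noncomputable instance (n : ℕ) : MeasurableSpace (EuclideanSpace ℂ (Fin n)) := borel _
instance (n : ℕ) : BorelSpace (EuclideanSpace ℂ (Fin n)) := ⟨rfl⟩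

/-- A function `f : ℂⁿ → ℂ` is pluriharmonic if `f = g + conj h` for entire `g, h`. -/
def Pluriharmonic {n : ℕ} (f : EuclideanSpace ℂ (Fin n) → ℂ) : Prop :=
  ∃ g h : EuclideanSpace ℂ (Fin n) → ℂ, Differentiable ℂ g ∧ Differentiable ℂ h ∧
    ∀ z, f z = g z + (starRingEnd ℂ) (h z)

/-- `‖f‖_{p,α}^p = (p/(2πα))^n ∫_{ℂⁿ} |f(z) e^{-|z|²/(2α)}|^p dA(z)`, as a value in `[0,∞]`. -/
noncomputable def fockNormP (n : ℕ) (p α : ℝ) (f : EuclideanSpace ℂ (Fin n) → ℂ) : ℝ≥0∞ :=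
  ENNReal.ofReal ((p / (2 * π * α)) ^ n) *
    ∫⁻ z, ENNReal.ofReal ((‖f z‖ * Real.exp (-‖z‖ ^ 2 / (2 * α))) ^ p)

open scoped Topology ComplexConjugate
open Real (circleAverage)

section HolomorphicLimit

variable {E F : Type*} [NormedAddCommGroup E] [NormedSpace ℂ E]
  [NormedAddCommGroup F] [NormedSpace ℂ F]

lemma norm_fderiv_le_of_forall_mem_ball_norm_le {Φ : E → F} (hΦ : Differentiable ℂ Φ) {z : E}
    {r ε : ℝ} (hr : 0 < r) (hε : ∀ ζ ∈ ball z r, ‖Φ ζ‖ ≤ ε) : ‖fderiv ℂ Φ z‖ ≤ 2 * ε / r := by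
  refine Complex.norm_fderiv_le_div_of_mapsTo_ball hΦ.differentiableOn (fun ζ hζ => ?_) hr
  rw [mem_closedBall, dist_eq_norm]
  calc ‖Φ ζ - Φ z‖ ≤ ‖Φ ζ‖ + ‖Φ z‖ := norm_sub_le _ _
    _ ≤ 2 * ε := by linarith [hε ζ hζ, hε z (mem_ball_self hr)]

lemma uniformCauchySeqOn_fderiv_ball {ι : Type*} {l : Filter ι} {Φ : ι → E → F}
    (hΦ : ∀ i, Differentiable ℂ (Φ i)) {x : E} (h : UniformCauchySeqOn Φ l (ball x 2)) :
    UniformCauchySeqOn (fun i => fderiv ℂ (Φ i)) l (ball x 1) := by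
  rw [SeminormedAddGroup.uniformCauchySeqOn_iff_tendstoUniformlyOn_zero,
    Metric.tendstoUniformlyOn_iff] at h ⊢
  intro ε hε
  filter_upwards [h (ε / 4) (by positivity)] with i hi y hy
  simp only [Pi.zero_apply, dist_zero_left, neg_add_eq_sub] at hi ⊢
  have hsub : ball y 1 ⊆ ball x 2 := ball_subset_ball' (by linarith [mem_ball.1 hy])
  have hbound := norm_fderiv_le_of_forall_mem_ball_norm_le ((hΦ i.2).sub (hΦ i.1)) one_pos
    fun ζ hζ => (hi ζ (hsub hζ)).le
  rw [fderiv_sub (hΦ i.2 _) (hΦ i.1 _)] at hbound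
  linarith

theorem TendstoLocallyUniformly.differentiable [CompleteSpace F] [ProperSpace E] {ι : Type*}
    {l : Filter ι} [l.NeBot] {Φ : ι → E → F} {Ψ : E → F} (hΦ : ∀ i, Differentiable ℂ (Φ i))
    (h : TendstoLocallyUniformly Φ Ψ l) : Differentiable ℂ Ψ := by
  intro x
  have hder := uniformCauchySeqOn_fderiv_ball hΦ <|
    ((tendstoLocallyUniformly_iff_forall_isCompact.1 h _ (isCompact_closedBall x 2)).mono
      ball_subset_closedBall).uniformCauchySeqOn
  have hlim := hder.tendstoUniformlyOn_of_tendsto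
    (f := fun y => limUnder l fun i => fderiv ℂ (Φ i) y) fun y hy =>
      tendsto_nhds_limUnder (cauchy_map_iff_exists_tendsto.1 (hder.cauchy_map hy))
  exact (hasFDerivAt_of_tendstoUniformlyOn isOpen_ball hlim (fun i y _ => (hΦ i y).hasFDerivAt)
    (fun y _ => h.tendstoLocallyUniformlyOn.tendsto_at (Set.mem_univ y))
    (mem_ball_self one_pos)).differentiableAt

end HolomorphicLimit

section HolomorphicPart

lemma norm_circleAverage_le {E : Type*} [NormedAddCommGroup E] [NormedSpace ℝ E] {f : ℂ → E}
    {c : ℂ} {R M : ℝ} (hM : ∀ w ∈ sphere c |R|, ‖f w‖ ≤ M) : ‖circleAverage f c R‖ ≤ M := by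
  rw [Real.circleAverage_def, norm_smul, norm_inv, Real.norm_of_nonneg (by positivity)]
  have := intervalIntegral.norm_integral_le_of_norm_le_const (a := 0) (b := 2 * π)
    fun θ _ => hM _ (circleMap_mem_sphere' c R θ)
  rw [sub_zero, abs_of_pos (by positivity)] at this
  calc (2 * π)⁻¹ * ‖∫ θ in 0..2 * π, f (circleMap c R θ)‖ ≤ (2 * π)⁻¹ * (M * (2 * π)) := by
        gcongr
    _ = M := by field_simp

lemma sub_one_ne_zero_of_mem_sphere_two {w : ℂ} (hw : w ∈ sphere (0 : ℂ) 2) : w - 1 ≠ 0 := by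
  rw [sub_ne_zero]
  rintro rfl
  norm_num at hw

lemma norm_div_sub_one_le_of_mem_sphere_two {w : ℂ} (hw : w ∈ sphere (0 : ℂ) 2) :
    ‖w / (w - 1)‖ ≤ 2 := by
  rw [mem_sphere_zero_iff_norm] at hw
  have : 1 ≤ ‖w - 1‖ := by linarith [norm_sub_norm_le w 1, norm_one (α := ℂ)]
  rw [norm_div, hw, div_le_iff₀ (by linarith)]
  linarith

lemma continuousOn_div_sub_one_sphere_two : ContinuousOn (fun w : ℂ => w / (w - 1)) (sphere 0 2) :=
  continuousOn_id.div (continuousOn_id.sub continuousOn_const)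
    fun _ hw => sub_one_ne_zero_of_mem_sphere_two hw

lemma circleAverage_div_sub_one_mul {φ : ℂ → ℂ} (hφ : Differentiable ℂ φ) :
    circleAverage (fun w => w / (w - 1) * φ w) 0 2 = φ 1 := by
  simpa using hφ.diffContOnCl.circleAverage_smul_div (c := 0) (R := 2) (w := 1) (by simp)

lemma circleAverage_div_sub_one_mul_conj {φ : ℂ → ℂ} (hφ : Differentiable ℂ φ) (hφ0 : φ 0 = 0) :
    circleAverage (fun w => w / (w - 1) * conj (φ w)) 0 2 = 0 := by
  -- On the circle `conj w = 4 / w`, which turns the integrand into the conjugate of a function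
  -- holomorphic on the closed disc.
  have hconj : Set.EqOn (fun w => w / (w - 1) * conj (φ w))
      (Complex.conjCLE.toContinuousLinearMap ∘ fun w => 4 / (4 - w) * φ w) (sphere 0 |2|) := by
    intro w hw
    rw [abs_two] at hw
    have h1 := sub_one_ne_zero_of_mem_sphere_two hw
    have h0 : w ≠ 0 := ne_zero_of_mem_sphere two_ne_zero ⟨w, hw⟩
    have hw' : conj w = 4 / w := by
      rw [eq_div_iff h0, mul_comm, Complex.mul_conj, Complex.normSq_eq_norm_sq,
        mem_sphere_zero_iff_norm.1 hw]
      norm_num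
    simp only [Function.comp_apply, ContinuousLinearEquiv.coe_coe, Complex.conjCLE_apply,
      map_mul, map_div₀, map_sub, map_ofNat, hw']
    field_simp
  have hhol : DiffContOnCl ℂ (fun w => 4 / (4 - w) * φ w) (ball 0 |2|) := by
    refine DifferentiableOn.diffContOnCl ?_
    rw [closure_ball _ (by norm_num)]
    refine ((differentiableOn_const _).div ((differentiableOn_const _).sub differentiableOn_id)
      fun w hw => ?_).mul hφ.differentiableOn
    rw [sub_ne_zero]
    rintro rfl
    norm_num at hw
  have hint : CircleIntegrable (fun w => 4 / (4 - w) * φ w) 0 2 :=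
    (hhol.continuousOn.mono (by rw [closure_ball _ (by norm_num)]; exact sphere_subset_closedBall)
      ).circleIntegrable'
  rw [Real.circleAverage_congr_sphere hconj, ContinuousLinearMap.circleAverage_comp_comm _ hint,
    hhol.circleAverage]
  simp [hφ0]

variable {E : Type*} [NormedAddCommGroup E] [NormedSpace ℂ E]

/-- The Cauchy integral at `1`, over the circle of radius `2`, of `f` restricted to the complex line
through `z`: it recovers `g` from `g + conj h` when `h 0 = 0`. -/
noncomputable def holomorphicPart (f : E → ℂ) (z : E) : ℂ :=
  circleAverage (fun w => w / (w - 1) * f (w • z)) 0 2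

lemma circleIntegrable_holomorphicPart {f : E → ℂ} (hf : Continuous f) (z : E) :
    CircleIntegrable (fun w => w / (w - 1) * f (w • z)) 0 2 :=
  (continuousOn_div_sub_one_sphere_two.mul
    (hf.comp (continuous_id.smul continuous_const)).continuousOn).circleIntegrable zero_le_two

theorem holomorphicPart_add_conj {g h : E → ℂ} (hg : Differentiable ℂ g)
    (hh : Differentiable ℂ h) (h0 : h 0 = 0) :
    holomorphicPart (fun z => g z + conj (h z)) = g := by
  funext z
  have hline : Differentiable ℂ fun w : ℂ => w • z := differentiable_id.smul_const z
  simp only [holomorphicPart, mul_add]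
  rw [Real.circleAverage_fun_add (circleIntegrable_holomorphicPart hg.continuous z)
      (circleIntegrable_holomorphicPart (f := fun z => conj (h z))
        (Complex.continuous_conj.comp hh.continuous) z),
    circleAverage_div_sub_one_mul (φ := fun w => g (w • z)) (hg.comp hline),
    circleAverage_div_sub_one_mul_conj (φ := fun w => h (w • z)) (hh.comp hline)
      (by simpa using h0), one_smul, add_zero]

lemma norm_holomorphicPart_sub_le {u v : E → ℂ} (hu : Continuous u) (hv : Continuous v) {z : E}
    {ε : ℝ} (hε : ∀ w ∈ sphere (0 : ℂ) 2, ‖u (w • z) - v (w • z)‖ ≤ ε) :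
    ‖holomorphicPart u z - holomorphicPart v z‖ ≤ 2 * ε := by
  rw [holomorphicPart, holomorphicPart, ← Real.circleAverage_fun_sub
    (circleIntegrable_holomorphicPart hu z) (circleIntegrable_holomorphicPart hv z)]
  refine norm_circleAverage_le fun w hw => ?_
  rw [abs_two] at hw
  rw [← mul_sub, norm_mul]
  exact mul_le_mul (norm_div_sub_one_le_of_mem_sphere_two hw) (hε w hw) (norm_nonneg _) zero_le_two

theorem tendstoLocallyUniformly_holomorphicPart [ProperSpace E] {ι : Type*} {l : Filter ι}
    {f : ι → E → ℂ} {F : E → ℂ} (hf : ∀ i, Continuous (f i)) (hF : Continuous F)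
    (h : TendstoLocallyUniformly f F l) :
    TendstoLocallyUniformly (fun i => holomorphicPart (f i)) (holomorphicPart F) l := by
  rw [tendstoLocallyUniformly_iff_forall_isCompact] at h ⊢
  intro K hK
  have hK' := ((isCompact_sphere (0 : ℂ) 2).prod hK).image
    (f := fun p : ℂ × E => p.1 • p.2) (continuous_fst.smul continuous_snd)
  have hunif := Metric.tendstoUniformlyOn_iff.1 (h _ hK')
  rw [Metric.tendstoUniformlyOn_iff]
  intro ε hε
  filter_upwards [hunif (ε / 4) (by positivity)] with i hi z hz
  rw [dist_eq_norm]
  have := norm_holomorphicPart_sub_le hF (hf i) fun w hw => by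
    simpa only [dist_eq_norm] using (hi _ ⟨(w, z), ⟨hw, hz⟩, rfl⟩).le
  linarith

end HolomorphicPart

noncomputable def Circle.smulLinearIsometryEquiv (E : Type*) [NormedAddCommGroup E]
    [NormedSpace ℂ E] (c : Circle) : E ≃ₗᵢ[ℝ] E :=
  { DistribMulAction.toLinearEquiv ℝ E c with norm_map' := Circle.norm_smul c }

theorem exists_tendstoLocallyUniformly_of_uniformCauchySeqOn_closedBall {α β ι : Type*}
    [PseudoMetricSpace α] [UniformSpace β] [CompleteSpace β] {l : Filter ι} [l.NeBot]
    {F : ι → α → β} (x₀ : α) (h : ∀ R, UniformCauchySeqOn F l (closedBall x₀ R)) :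
    ∃ G : α → β, TendstoLocallyUniformly F G l := by
  choose G hG using fun x => cauchy_map_iff_exists_tendsto.1 <|
    (h (dist x x₀)).cauchy_map (mem_closedBall.2 le_rfl)
  refine ⟨G, tendstoLocallyUniformly_of_forall_exists_nhds fun x => ⟨closedBall x₀ (dist x x₀ + 1),
    closedBall_mem_nhds_of_mem (by simp), (h _).tendstoUniformlyOn_of_tendsto fun y _ => hG y⟩⟩

theorem ae_eq_of_tendsto_eLpNorm_of_tendsto {α E : Type*} [MeasurableSpace α] {μ : Measure α}
    [NormedAddCommGroup E] {p : ℝ≥0∞} (hp : p ≠ 0) {u : ℕ → α → E} {v U : α → E}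
    (hu : ∀ m, AEStronglyMeasurable (u m) μ) (hv : AEStronglyMeasurable v μ)
    (hL : Tendsto (fun m => eLpNorm (u m - v) p μ) atTop (𝓝 0))
    (hU : ∀ᵐ x ∂μ, Tendsto (fun m => u m x) atTop (𝓝 (U x))) : U =ᵐ[μ] v := by
  obtain ⟨ns, hns, hae⟩ := (tendstoInMeasure_of_tendsto_eLpNorm hp hu hv hL).exists_seq_tendsto_ae
  filter_upwards [hae, hU] with x hv hU
  exact tendsto_nhds_unique (hU.comp hns.tendsto_atTop) hv

section Euclidean

variable {n : ℕ}

local notation "ℂⁿ" => EuclideanSpace ℂ (Fin n)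

lemma setIntegral_ball_circle_smul {E : Type*} [NormedAddCommGroup E] [NormedSpace ℝ E]
    (φ : ℂⁿ → E) (c : Circle) (r : ℝ) :
    ∫ ζ in ball 0 r, φ (c • ζ) = ∫ ζ in ball 0 r, φ ζ := by
  have := (Circle.smulLinearIsometryEquiv ℂⁿ c).measurePreserving.setIntegral_preimage_emb
    (Circle.smulLinearIsometryEquiv ℂⁿ c).toHomeomorph.measurableEmbedding φ (ball 0 r)
  rwa [LinearIsometryEquiv.preimage_ball, map_zero] at this

namespace Pluriharmonic

theorem continuous {f : ℂⁿ → ℂ} (hf : Pluriharmonic f) : Continuous f := by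
  obtain ⟨g, h, hg, hh, hf⟩ := hf
  rw [funext hf]
  exact hg.continuous.add (Complex.continuous_conj.comp hh.continuous)

theorem sub {f f' : ℂⁿ → ℂ} (hf : Pluriharmonic f) (hf' : Pluriharmonic f') :
    Pluriharmonic fun z => f z - f' z := by
  obtain ⟨g, h, hg, hh, hf⟩ := hf
  obtain ⟨g', h', hg', hh', hf'⟩ := hf'
  exact ⟨fun z => g z - g' z, fun z => h z - h' z, hg.sub hg', hh.sub hh',
    fun z => by simp only [hf, hf', map_sub]; ring⟩

theorem exists_eq_add_conj_of_map_zero {f : ℂⁿ → ℂ} (hf : Pluriharmonic f) :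
    ∃ g h : ℂⁿ → ℂ, Differentiable ℂ g ∧ Differentiable ℂ h ∧ h 0 = 0 ∧
      f = fun z => g z + conj (h z) := by
  obtain ⟨g, h, hg, hh, hf⟩ := hf
  refine ⟨fun z => g z + conj (h 0), fun z => h z - h 0, hg.add_const _, hh.sub_const _,
    sub_self _, funext fun z => ?_⟩
  rw [hf, map_sub]
  ring

theorem differentiable_holomorphicPart {f : ℂⁿ → ℂ} (hf : Pluriharmonic f) :
    Differentiable ℂ (holomorphicPart f) := by
  obtain ⟨g, h, hg, hh, h0, rfl⟩ := hf.exists_eq_add_conj_of_map_zero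
  rwa [holomorphicPart_add_conj hg hh h0]

theorem differentiable_conj_sub_holomorphicPart {f : ℂⁿ → ℂ} (hf : Pluriharmonic f) :
    Differentiable ℂ fun z => conj (f z - holomorphicPart f z) := by
  obtain ⟨g, h, hg, hh, h0, rfl⟩ := hf.exists_eq_add_conj_of_map_zero
  simpa [holomorphicPart_add_conj hg hh h0] using hh

theorem circleAverage_add_smul {f : ℂⁿ → ℂ} (hf : Pluriharmonic f) (z ζ : ℂⁿ) :
    circleAverage (fun w => f (z + w • ζ)) 0 1 = f z := by
  obtain ⟨g, h, hg, hh, hf⟩ := hf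
  have hline : Differentiable ℂ fun w : ℂ => z + w • ζ :=
    (differentiable_id.smul_const ζ).const_add z
  have hG : Differentiable ℂ fun w : ℂ => g (z + w • ζ) := hg.comp hline
  have hH : Differentiable ℂ fun w : ℂ => h (z + w • ζ) := hh.comp hline
  have hconj := Complex.conjCLE.toContinuousLinearMap.circleAverage_comp_comm
    (c := 0) (R := 1) hH.continuous.continuousOn.circleIntegrable'
  simp only [hf]
  rw [Real.circleAverage_fun_add (f₂ := fun w => conj (h (z + w • ζ)))
    hG.continuous.continuousOn.circleIntegrable'
    (Complex.continuous_conj.comp hH.continuous).continuousOn.circleIntegrable']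
  simp only [Function.comp_def, ContinuousLinearEquiv.coe_coe, Complex.conjCLE_apply] at hconj
  rw [hconj, hG.diffContOnCl.circleAverage, hH.diffContOnCl.circleAverage]
  simp

theorem setIntegral_ball_add {f : ℂⁿ → ℂ} (hf : Pluriharmonic f) (z : ℂⁿ) (r : ℝ) :
    ∫ ζ in ball 0 r, f (z + ζ) = volume.real (ball (0 : ℂⁿ) r) • f z := by
  have hcont : Continuous fun p : ℝ × ℂⁿ => f (z + circleMap 0 1 p.1 • p.2) :=
    hf.continuous.comp (continuous_const.add
      (((continuous_circleMap 0 1).comp continuous_fst).smul continuous_snd))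
  have hint : Integrable (Function.uncurry fun θ ζ => f (z + circleMap 0 1 θ • ζ))
      ((volume.restrict (Set.uIoc 0 (2 * π))).prod (volume.restrict (ball (0 : ℂⁿ) r))) := by
    rw [Measure.prod_restrict]
    exact (hcont.continuousOn.integrableOn_compact (isCompact_uIcc.prod (isCompact_closedBall 0 r))
      ).mono_set (Set.prod_mono Set.uIoc_subset_uIcc ball_subset_closedBall)
  calc ∫ ζ in ball 0 r, f (z + ζ)
      = circleAverage (fun w => ∫ ζ in ball 0 r, f (z + w • ζ)) 0 1 := by
        refine (Real.circleAverage_const_on_circle fun w hw => ?_).symm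
        rw [abs_one] at hw
        exact setIntegral_ball_circle_smul (fun ζ => f (z + ζ)) ⟨w, hw⟩ r
    _ = ∫ ζ in ball 0 r, circleAverage (fun w => f (z + w • ζ)) 0 1 := by
        simp only [Real.circleAverage_def]
        rw [intervalIntegral_integral_swap hint, integral_smul]
    _ = volume.real (ball (0 : ℂⁿ) r) • f z := by
        simp only [hf.circleAverage_add_smul, setIntegral_const]

theorem volume_ball_mul_enorm_le {f : ℂⁿ → ℂ} (hf : Pluriharmonic f) (z : ℂⁿ) (r : ℝ) :
    volume (ball (0 : ℂⁿ) r) * ‖f z‖ₑ ≤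
      eLpNorm (fun ζ => f (z + ζ)) 1 (volume.restrict (ball 0 r)) := by
  rw [eLpNorm_one_eq_lintegral_enorm]
  calc volume (ball (0 : ℂⁿ) r) * ‖f z‖ₑ = ‖∫ ζ in ball 0 r, f (z + ζ)‖ₑ := by
        rw [hf.setIntegral_ball_add, enorm_smul, Real.enorm_of_nonneg measureReal_nonneg,
          ofReal_measureReal measure_ball_lt_top.ne]
    _ ≤ _ := enorm_integral_le_lintegral_enorm _

theorem exists_enorm_le_mul_eLpNorm {W : ℂⁿ → ℝ} (hW : Continuous W) (hW0 : ∀ z, 0 < W z)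
    {p : ℝ≥0∞} (hp : 1 ≤ p) (R : ℝ) :
    ∃ C : ℝ≥0∞, C ≠ ⊤ ∧ ∀ u : ℂⁿ → ℂ, Pluriharmonic u → ∀ z ∈ closedBall (0 : ℂⁿ) R,
      ‖u z‖ₑ ≤ C * eLpNorm (fun ζ => W ζ • u ζ) p volume := by
  obtain ⟨K, hK⟩ := (isCompact_closedBall (0 : ℂⁿ) (R + 1)).exists_bound_of_continuousOn
    (hW.inv₀ fun z => (hW0 z).ne').continuousOn
  set V := volume (ball (0 : ℂⁿ) 1)
  have hV0 : V ≠ 0 := (measure_ball_pos _ _ one_pos).ne'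
  have hVtop : V ≠ ⊤ := measure_ball_lt_top.ne
  refine ⟨V⁻¹ * (ENNReal.ofReal K * V ^ (1 - 1 / p.toReal)), by finiteness, fun u hu z hz => ?_⟩
  have hv : Continuous fun ζ => W ζ • u ζ := hW.smul hu.continuous
  rw [mul_assoc, ← ENNReal.mul_le_iff_le_inv hV0 hVtop]
  calc V * ‖u z‖ₑ ≤ eLpNorm (fun ζ => u (z + ζ)) 1 (volume.restrict (ball 0 1)) :=
        hu.volume_ball_mul_enorm_le z 1
    _ ≤ ENNReal.ofReal K *
          eLpNorm (fun ζ => W (z + ζ) • u (z + ζ)) 1 (volume.restrict (ball 0 1)) := by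
        refine eLpNorm_le_mul_eLpNorm_of_ae_le_mul ((ae_restrict_iff' measurableSet_ball).2
          (Eventually.of_forall fun ζ hζ => ?_)) 1
        have hzζ : z + ζ ∈ closedBall 0 (R + 1) := by
          rw [mem_closedBall_zero_iff] at hz ⊢
          linarith [norm_add_le z ζ, mem_ball_zero_iff.1 hζ]
        have hWK := hK _ hzζ
        have hWpos := hW0 (z + ζ)
        rw [Pi.inv_apply, norm_inv, Real.norm_of_nonneg hWpos.le] at hWK
        rw [norm_smul, Real.norm_of_nonneg hWpos.le]
        calc ‖u (z + ζ)‖ = (W (z + ζ))⁻¹ * (W (z + ζ) * ‖u (z + ζ)‖) := by field_simp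
          _ ≤ K * (W (z + ζ) * ‖u (z + ζ)‖) := by gcongr
    _ ≤ ENNReal.ofReal K *
          (eLpNorm (fun ζ => W (z + ζ) • u (z + ζ)) p (volume.restrict (ball 0 1)) *
            V ^ (1 - 1 / p.toReal)) := by
        gcongr
        have := eLpNorm_le_eLpNorm_mul_rpow_measure_univ (μ := volume.restrict (ball (0 : ℂⁿ) 1))
          (f := fun ζ => W (z + ζ) • u (z + ζ)) hp
          (hv.comp (continuous_const_add z)).aestronglyMeasurable
        rwa [Measure.restrict_apply_univ, ENNReal.toReal_one, div_one] at this
    _ ≤ ENNReal.ofReal K * (eLpNorm (fun ζ => W ζ • u ζ) p volume * V ^ (1 - 1 / p.toReal)) := by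
        gcongr
        calc _ ≤ eLpNorm (fun ζ => W (z + ζ) • u (z + ζ)) p volume :=
              eLpNorm_mono_measure _ Measure.restrict_le_self
          _ = _ := eLpNorm_comp_measurePreserving (g := fun ζ => W ζ • u ζ)
              hv.aestronglyMeasurable (measurePreserving_add_left volume z)
    _ = _ := by ring

theorem uniformCauchySeqOn_closedBall_of_tendsto_eLpNorm {W : ℂⁿ → ℝ} (hW : Continuous W)
    (hW0 : ∀ z, 0 < W z) {p : ℝ≥0∞} (hp : 1 ≤ p) {ι : Type*} {l : Filter ι}
    {f : ι → ℂⁿ → ℂ} (hf : ∀ i, Pluriharmonic (f i)) {g : ℂⁿ → ℂ}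
    (hg : AEStronglyMeasurable g volume)
    (h : Tendsto (fun i => eLpNorm (fun z => W z • (f i z - g z)) p volume) l (𝓝 0)) (R : ℝ) :
    UniformCauchySeqOn f l (closedBall 0 R) := by
  obtain ⟨C, hC, hbound⟩ := exists_enorm_le_mul_eLpNorm hW hW0 hp R
  have hmeas : ∀ i, AEStronglyMeasurable (fun z => W z • (f i z - g z)) volume := fun i =>
    hW.aestronglyMeasurable.smul ((hf i).continuous.aestronglyMeasurable.sub hg)
  have hdist : ∀ i j, ∀ z ∈ closedBall (0 : ℂⁿ) R, ‖f j z - f i z‖ₑ ≤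
      C * (eLpNorm (fun z => W z • (f j z - g z)) p volume +
        eLpNorm (fun z => W z • (f i z - g z)) p volume) := by
    intro i j z hz
    refine (hbound _ ((hf j).sub (hf i)) z hz).trans ?_
    gcongr
    refine (le_of_eq ?_).trans (eLpNorm_sub_le (hmeas j) (hmeas i) hp)
    congr 1
    funext ζ
    simp only [Pi.sub_apply, ← smul_sub, sub_sub_sub_cancel_right]
  have hsmall : Tendsto (fun ij : ι × ι => C * (eLpNorm (fun z => W z • (f ij.2 z - g z)) p volume +
      eLpNorm (fun z => W z • (f ij.1 z - g z)) p volume)) (l ×ˢ l) (𝓝 0) := by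
    simpa using ENNReal.Tendsto.const_mul ((h.comp tendsto_snd).add (h.comp tendsto_fst))
      (Or.inr hC)
  rw [SeminormedAddGroup.uniformCauchySeqOn_iff_tendstoUniformlyOn_zero,
    Metric.tendstoUniformlyOn_iff]
  intro ε hε
  filter_upwards [hsmall.eventually (gt_mem_nhds (ENNReal.ofReal_pos.2 hε))] with ij hij z hz
  rw [Pi.zero_apply, dist_zero_left, neg_add_eq_sub, ← ENNReal.ofReal_lt_ofReal_iff hε, ofReal_norm]
  exact (hdist ij.1 ij.2 z hz).trans_lt hij

end Pluriharmonic

theorem TendstoLocallyUniformly.pluriharmonic {ι : Type*} {l : Filter ι} [l.NeBot]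
    {f : ι → ℂⁿ → ℂ} {F : ℂⁿ → ℂ}
    (hf : ∀ i, Pluriharmonic (f i)) (h : TendstoLocallyUniformly f F l) : Pluriharmonic F := by
  have hF : Continuous F := h.continuous (.of_forall fun i => (hf i).continuous)
  have hG := tendstoLocallyUniformly_holomorphicPart (fun i => (hf i).continuous) hF h
  have hH : TendstoLocallyUniformly (fun i z => conj (f i z - holomorphicPart (f i) z))
      (fun z => conj (F z - holomorphicPart F z)) l :=
    Complex.conjLIE.isometry.uniformContinuous.comp_tendstoLocallyUniformly (h.fun_sub hG)
  refine ⟨holomorphicPart F, fun z => conj (F z - holomorphicPart F z),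
    hG.differentiable fun i => (hf i).differentiable_holomorphicPart,
    hH.differentiable fun i => (hf i).differentiable_conj_sub_holomorphicPart, fun z => ?_⟩
  simp

end Euclidean

lemma fockNormP_eq_mul_eLpNorm_rpow {n : ℕ} {p : ℝ} (hp : 0 < p) (α : ℝ)
    (u : EuclideanSpace ℂ (Fin n) → ℂ) :
    fockNormP n p α u = ENNReal.ofReal ((p / (2 * π * α)) ^ n) *
      eLpNorm (fun z => Real.exp (-‖z‖ ^ 2 / (2 * α)) • u z) (ENNReal.ofReal p) volume ^ p := by
  rw [fockNormP, eLpNorm_eq_lintegral_rpow_enorm_toReal (by simpa using hp) ENNReal.ofReal_ne_top,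
    ENNReal.toReal_ofReal hp.le, ← ENNReal.rpow_mul, one_div_mul_cancel hp.ne', ENNReal.rpow_one]
  congr 1
  refine lintegral_congr fun z => ?_
  rw [enorm_smul, Real.enorm_of_nonneg (Real.exp_pos _).le, ← ofReal_norm,
    ← ENNReal.ofReal_mul (Real.exp_pos _).le, mul_comm,
    ENNReal.ofReal_rpow_of_nonneg (by positivity) hp.le]

lemma tendsto_eLpNorm_of_tendsto_fockNormP {n : ℕ} {p α : ℝ} (hp : 0 < p) (hα : 0 < α)
    {u : ℕ → EuclideanSpace ℂ (Fin n) → ℂ}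
    (h : Tendsto (fun m => fockNormP n p α (u m)) atTop (𝓝 0)) :
    Tendsto (fun m => eLpNorm (fun z => Real.exp (-‖z‖ ^ 2 / (2 * α)) • u m z) (ENNReal.ofReal p)
      volume) atTop (𝓝 0) := by
  set c := ENNReal.ofReal ((p / (2 * π * α)) ^ n)
  have hc : c ≠ 0 := by simp only [c, ne_eq, ENNReal.ofReal_eq_zero, not_le]; positivity
  simp only [fockNormP_eq_mul_eLpNorm_rpow hp] at h
  have hpow : Tendsto (fun m => eLpNorm (fun z => Real.exp (-‖z‖ ^ 2 / (2 * α)) • u m z)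
      (ENNReal.ofReal p) volume ^ p) atTop (𝓝 0) := by
    simpa only [c, ← mul_assoc, ENNReal.inv_mul_cancel hc ENNReal.ofReal_ne_top, one_mul, mul_zero]
      using ENNReal.Tendsto.const_mul h (Or.inr (ENNReal.inv_ne_top.2 hc))
  simpa [Function.comp_def, ← ENNReal.rpow_mul, hp.ne', hp] using
    ((ENNReal.continuous_rpow_const (y := 1 / p)).tendsto 0).comp hpow

theorem pluriharmonicFockSpaceClosed_general (n : ℕ) (p α : ℝ)
    (hp : 1 ≤ p) (hα : 0 < α)
    (f : ℕ → EuclideanSpace ℂ (Fin n) → ℂ)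
    (hph : ∀ m, Pluriharmonic (f m))
    (g : EuclideanSpace ℂ (Fin n) → ℂ) (hg : Measurable g)
    (hconv : Filter.Tendsto (fun m => fockNormP n p α (fun z => f m z - g z))
      Filter.atTop (nhds 0)) :
    ∃ g₀ : EuclideanSpace ℂ (Fin n) → ℂ, Pluriharmonic g₀ ∧ g =ᵐ[volume] g₀ := by
  set W : EuclideanSpace ℂ (Fin n) → ℝ := fun z => Real.exp (-‖z‖ ^ 2 / (2 * α))
  have hW : Continuous W := by fun_prop
  have hW0 : ∀ z, 0 < W z := fun z => Real.exp_pos _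
  have hp' : 1 ≤ ENNReal.ofReal p := ENNReal.one_le_ofReal.2 hp
  have hL := tendsto_eLpNorm_of_tendsto_fockNormP (by linarith) hα hconv
  obtain ⟨F, hF⟩ := exists_tendstoLocallyUniformly_of_uniformCauchySeqOn_closedBall 0
    (Pluriharmonic.uniformCauchySeqOn_closedBall_of_tendsto_eLpNorm hW hW0 hp' hph
      hg.aestronglyMeasurable hL)
  refine ⟨F, hF.pluriharmonic hph, ?_⟩
  have hWF : (fun z => W z • F z) =ᵐ[volume] fun z => W z • g z :=
    ae_eq_of_tendsto_eLpNorm_of_tendsto (u := fun m z => W z • f m z) (by positivity)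
      (fun m => (hW.smul (hph m).continuous).aestronglyMeasurable)
      (hW.aestronglyMeasurable.smul hg.aestronglyMeasurable)
      (hL.congr fun m => congrArg (eLpNorm · _ _) (funext fun z => smul_sub _ _ _))
      (.of_forall fun z =>
        (hF.tendstoLocallyUniformlyOn.tendsto_at (Set.mem_univ z)).const_smul (W z))
  filter_upwards [hWF] with z hz
  exact (smul_right_injective ℂ (hW0 z).ne' hz).symm

/-- For `1 ≤ p < ∞` and `α > 0`, `PH^p_α` is closed in `L^p_α`: if `(f_m)`
is a sequence of pluriharmonic functions with finite `‖·‖_{p,α}`-norm and `f` is a measurable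
function with `‖f_m − f‖_{p,α} → 0`, then `f` agrees a.e. with a pluriharmonic function. -/
theorem pluriharmonicFockSpaceClosed (n : ℕ) (hn : 0 < n) (p α : ℝ)
    (hp : 1 ≤ p) (hα : 0 < α)
    (f : ℕ → EuclideanSpace ℂ (Fin n) → ℂ)
    (hph : ∀ m, Pluriharmonic (f m))
    (hfin : ∀ m, fockNormP n p α (f m) < ⊤)
    (g : EuclideanSpace ℂ (Fin n) → ℂ) (hg : Measurable g)
    (hconv : Filter.Tendsto (fun m => fockNormP n p α (fun z => f m z - g z))
      Filter.atTop (nhds 0)) :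
    ∃ g₀ : EuclideanSpace ℂ (Fin n) → ℂ, Pluriharmonic g₀ ∧ g =ᵐ[volume] g₀ :=
  pluriharmonicFockSpaceClosed_general n p α hp hα f hph g hg hconv
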